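/- arXiv:2504.02228 — 3 statements merged into one kernel-verified Lean document; each statement's English description precedes it below -/
import Mathlib

section
/- The stochastic Lie–Trotter splitting scheme X_{n+1} = X_n ∗ exp{(-Γ⁽²⁾Y_n + η⁽²⁾ - ½Λ⁽²⁾)h + Σ⁽²⁾ΔW_n}, Y_{n+1} = Y_n ∗ exp{(Γ⁽¹⁾X_{n+1} - η⁽¹⁾ - ½Λ⁽¹⁾)h + Σ⁽¹⁾ΔW_n} preserves positivity: if (X₀, Y₀) ∈ ℝ₊^{2d}, then (X_n, Y_n) ∈ ℝ₊^{2d} for all n ≥ 0. -/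
/-- The stochastic Lie–Trotter splitting scheme preserves positivity: if `(X 0, Y 0)` has
all positive entries, then `(X n, Y n)` has all positive entries for every `n`. -/
theorem lieTrotter_positivity {d m : ℕ}
    (Γ₁ Γ₂ : Matrix (Fin d) (Fin d) ℝ) (η₁ η₂ Λ₁ Λ₂ : Fin d → ℝ)
    (S₁ S₂ : Matrix (Fin d) (Fin m) ℝ) (h : ℝ) (hh : 0 < h)
    (ΔW : ℕ → Fin m → ℝ)
    (X Y : ℕ → Fin d → ℝ)
    (hX : ∀ n i, X (n + 1) i =
      X n i * Real.exp ((-(Γ₂.mulVec (Y n)) + η₂ - (1 / 2 : ℝ) • Λ₂) i * h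
        + S₂.mulVec (ΔW n) i))
    (hY : ∀ n i, Y (n + 1) i =
      Y n i * Real.exp ((Γ₁.mulVec (X (n + 1)) - η₁ - (1 / 2 : ℝ) • Λ₁) i * h
        + S₁.mulVec (ΔW n) i))
    (hX0 : ∀ i, 0 < X 0 i) (hY0 : ∀ i, 0 < Y 0 i) :
    ∀ n, (∀ i, 0 < X n i) ∧ (∀ i, 0 < Y n i) := by
  intro n
  induction n with
  | zero => exact ⟨hX0, hY0⟩
  | succ k ih =>
    constructor
    · intro i; rw [hX k i]; exact mul_pos (ih.1 i) (Real.exp_pos _)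
    · intro i; rw [hY k i]
      exact mul_pos (ih.2 i) (Real.exp_pos _)
end

section
/- Let K: ℝ_{>0}^{2d} → ℝ^{2d×2d} be given by K(Z) = [[0, -K*(Z)],[K*(Z), 0]] with K*(Z) = diag(1/(x₁y₁),…,1/(x_dy_d)) for Z = (x₁,…,x_d,y₁,…,y_d). Let φ(Z₀) = (X₀, Y₀ ∗ exp{(Γ X₀ - c)t + w}) for a diagonal matrix Γ, constant vector c ∈ ℝ^d, scalar t, and vector w ∈ ℝ^d (exp componentwise). Then the Jacobian J = ∂φ(Z₀)/∂Z₀ satisfies Jᵀ K(φ(Z₀)) J = K(Z₀). -/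
open Matrix

/-- For the flow `φ(Z₀) = (X₀, Y₀ ∗ exp{(Γ X₀ - c) t + w})` with `Γ` diagonal, the Jacobian
`J = [[I, 0],[Γ Ȳ t, Y*]]` satisfies `Jᵀ K(φ(Z₀)) J = K(Z₀)`, where
`K(X,Y) = [[0, -K*(X,Y)],[K*(X,Y), 0]]` and `K*(X,Y) = diag(1/(xᵢ yᵢ))`. -/
theorem flow_jacobian_symplectic {d : ℕ}
    (Γ : Matrix (Fin d) (Fin d) ℝ) (hΓ : Γ.IsDiag)
    (c w : Fin d → ℝ) (t : ℝ)
    (X₀ Y₀ : Fin d → ℝ) (hX₀ : ∀ i, 0 < X₀ i) (hY₀ : ∀ i, 0 < Y₀ i)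
    (Y : Fin d → ℝ)
    (hY : ∀ i, Y i = Y₀ i * Real.exp ((Γ.mulVec X₀ - c) i * t + w i)) :
    (Matrix.fromBlocks (1 : Matrix (Fin d) (Fin d) ℝ) 0
        (t • (Γ * Matrix.diagonal Y)) (Matrix.diagonal fun i => Y i / Y₀ i))ᵀ *
      Matrix.fromBlocks 0 (-(Matrix.diagonal fun i => 1 / (X₀ i * Y i)))
        (Matrix.diagonal fun i => 1 / (X₀ i * Y i)) 0 *
      Matrix.fromBlocks (1 : Matrix (Fin d) (Fin d) ℝ) 0
        (t • (Γ * Matrix.diagonal Y)) (Matrix.diagonal fun i => Y i / Y₀ i) =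
    Matrix.fromBlocks 0 (-(Matrix.diagonal fun i => 1 / (X₀ i * Y₀ i)))
      (Matrix.diagonal fun i => 1 / (X₀ i * Y₀ i)) 0 := by
  have hYpos : ∀ i, 0 < Y i := fun i => by
    rw [hY i]; exact mul_pos (hY₀ i) (Real.exp_pos _)
  obtain ⟨g, rfl⟩ : ∃ g, Γ = Matrix.diagonal g := ⟨fun i => Γ i i, hΓ.diagonal_diag.symm⟩
  simp only [Matrix.fromBlocks_transpose, Matrix.fromBlocks_multiply,
    Matrix.transpose_smul, Matrix.transpose_mul, Matrix.diagonal_transpose,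
    Matrix.transpose_one, Matrix.transpose_zero, Matrix.diagonal_mul_diagonal,
    Matrix.smul_mul, Matrix.mul_smul, Matrix.mul_neg, Matrix.neg_mul,
    Matrix.one_mul, Matrix.mul_one, Matrix.zero_mul, Matrix.mul_zero,
    zero_add, add_zero, neg_zero, smul_zero, zero_mul, mul_zero]
  have hA : ((t • Matrix.diagonal fun i => g i * Y i * (1 / (X₀ i * Y i))) +
      t • -Matrix.diagonal fun i => 1 / (X₀ i * Y i) * (g i * Y i)) =
      (0 : Matrix (Fin d) (Fin d) ℝ) := by
    rw [show (fun i => g i * Y i * (1 / (X₀ i * Y i))) =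
        fun i => 1 / (X₀ i * Y i) * (g i * Y i) from funext fun i => by ring,
      smul_neg, add_neg_cancel]
  have hB : (-Matrix.diagonal fun i => 1 / (X₀ i * Y i) * (Y i / Y₀ i)) =
      -Matrix.diagonal fun i => 1 / (X₀ i * Y₀ i) := by
    refine congrArg _ (congrArg _ (funext fun i => ?_))
    field_simp [(hX₀ i).ne', (hY₀ i).ne', (hYpos i).ne']
  have hC : (Matrix.diagonal fun i => Y i / Y₀ i * (1 / (X₀ i * Y i))) =
      Matrix.diagonal fun i => 1 / (X₀ i * Y₀ i) := by
    refine congrArg _ (funext fun i => ?_)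
    field_simp [(hX₀ i).ne', (hY₀ i).ne', (hYpos i).ne']
  rw [hA, hB, hC]
end

section
/- Under the Strang splitting scheme with Σ⁽²⁾ ≡ 0, the iterates satisfy the componentwise bound X_{n+1} ≤ X₀ ∗ exp(η⁽²⁾ T) componentwise, for all n with (n+1)h ≤ T, where Γ⁽²⁾, Λ⁽²⁾ have nonnegative entries and Y_n has positive entries. -/
/-- Under the Strang splitting scheme with `Σ⁽²⁾ ≡ 0`, the iterates satisfy
`X (n+1) ≤ X 0 ∗ exp (η⁽²⁾ T)` componentwise for all `n` with `(n+1) h ≤ T`. -/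
theorem strang_X_uniform_bound {d : ℕ}
    (Γ₂ : Matrix (Fin d) (Fin d) ℝ) (η₂ Λ₂ : Fin d → ℝ)
    (hΓ : ∀ i j, 0 ≤ Γ₂ i j) (hη : ∀ i, 0 ≤ η₂ i) (hΛ : ∀ i, 0 ≤ Λ₂ i)
    (h T : ℝ) (hh : 0 < h) (N : ℕ) (hT : (N : ℝ) * h = T)
    (X Xt Y : ℕ → Fin d → ℝ)
    (hX0 : ∀ i, 0 < X 0 i) (hY : ∀ n i, 0 < Y n i)
    (hXt : ∀ n i, Xt n i =
      X n i * Real.exp ((-(Γ₂.mulVec (Y n)) + η₂ - (1 / 2 : ℝ) • Λ₂) i * (h / 2)))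
    (hXrec : ∀ n i, X (n + 1) i =
      Xt n i * Real.exp ((-(Γ₂.mulVec (Y (n + 1))) + η₂ - (1 / 2 : ℝ) • Λ₂) i * (h / 2))) :
    ∀ n : ℕ, ((n : ℝ) + 1) * h ≤ T →
      ∀ i, X (n + 1) i ≤ X 0 i * Real.exp (η₂ i * T) := by
  -- exponent bound
  have hexp : ∀ n i, (-(Γ₂.mulVec (Y n)) + η₂ - (1 / 2 : ℝ) • Λ₂) i ≤ η₂ i := by
    intro n i
    have hmv : 0 ≤ Γ₂.mulVec (Y n) i := by
      rw [Matrix.mulVec, dotProduct]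
      exact Finset.sum_nonneg fun j _ => mul_nonneg (hΓ i j) (hY n j).le
    simp only [Pi.add_apply, Pi.sub_apply, Pi.neg_apply, Pi.smul_apply, smul_eq_mul]
    nlinarith [hΛ i]
  -- positivity and step bound
  have hpos : ∀ n i, 0 < X n i := by
    intro n
    induction n with
    | zero => exact hX0
    | succ m ih =>
      intro i
      rw [hXrec m i, hXt m i]
      have := ih i
      positivity
  have hstep : ∀ n i, X (n + 1) i ≤ X n i * Real.exp (η₂ i * h) := by
    intro n i
    rw [hXrec n i, hXt n i]
    have e1 := hexp n i
    have e2 := hexp (n+1) i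
    have hx := (hpos n i).le
    have h2 : (0:ℝ) < h / 2 := by linarith
    calc X n i * Real.exp (_ * (h/2)) * Real.exp (_ * (h/2))
        ≤ X n i * Real.exp (η₂ i * (h/2)) * Real.exp (η₂ i * (h/2)) := by
          apply mul_le_mul (mul_le_mul_of_nonneg_left (Real.exp_le_exp.2 (mul_le_mul_of_nonneg_right e1 h2.le)) hx) (Real.exp_le_exp.2 (mul_le_mul_of_nonneg_right e2 h2.le)) (Real.exp_pos _).le (by positivity)
      _ = X n i * Real.exp (η₂ i * h) := by
          rw [mul_assoc, ← Real.exp_add]; ring_nf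
  -- iterate bound
  have hiter : ∀ n i, X n i ≤ X 0 i * Real.exp (η₂ i * ((n:ℝ) * h)) := by
    intro n
    induction n with
    | zero => intro i; simp
    | succ m ih =>
      intro i
      calc X (m+1) i ≤ X m i * Real.exp (η₂ i * h) := hstep m i
        _ ≤ X 0 i * Real.exp (η₂ i * ((m:ℝ) * h)) * Real.exp (η₂ i * h) := by
            gcongr; exact ih i
        _ = X 0 i * Real.exp (η₂ i * (((m+1:ℕ):ℝ) * h)) := by
            push_cast; rw [mul_assoc, ← Real.exp_add]; ring_nf
  intro n hn i
  calc X (n+1) i ≤ X 0 i * Real.exp (η₂ i * (((n+1:ℕ):ℝ) * h)) := hiter (n+1) i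
    _ ≤ X 0 i * Real.exp (η₂ i * T) := by
        have : ((n+1:ℕ):ℝ) * h ≤ T := by push_cast; linarith
        exact mul_le_mul_of_nonneg_left (Real.exp_le_exp.2 (mul_le_mul_of_nonneg_left this (hη i))) (hX0 i).le
end
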